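/- arXiv:2208.11093 — 6 statements merged into one kernel-verified Lean document; each statement's English description precedes it below -/
import Mathlib

section
/- For 0 < x < k and p, k > 0, the p-k gamma function satisfies the reflection formula ₚΓₖ(x) · ₚΓₖ(k - x) = (p/k²) · π / sin(πx/k). -/
open MeasureTheory Real

noncomputable def pkGamma (p k x : ℝ) : ℝ :=
  ∫ t in Set.Ioi (0:ℝ), Real.exp (-(t ^ k) / p) * t ^ (x - 1)

/-! The substitution `t ^ k = p s` gives `ₚΓₖ(x) = p ^ (x / k) / k * Γ(x / k)`. At `x` and `k - x`
the arguments of `Γ` are `x / k` and `1 - x / k`, so the powers of `p` multiply to `p` and Euler's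
reflection formula for `Γ` at `x / k` finishes the proof. -/

lemma pkGamma_eq_rpow_div_mul_Gamma {p k x : ℝ} (hp : 0 < p) (hk : 0 < k) (hx : 0 < x) :
    pkGamma p k x = p ^ (x / k) / k * Gamma (x / k) := by
  have hintegrand : (fun t : ℝ => exp (-(t ^ k) / p) * t ^ (x - 1)) =
      fun t => t ^ (x - 1) * exp (-p⁻¹ * t ^ k) := by
    ext t
    rw [mul_comm, neg_div, neg_mul, div_eq_inv_mul]
  rw [pkGamma, hintegrand,
    integral_rpow_mul_exp_neg_mul_rpow hk (by linarith) (inv_pos.2 hp), sub_add_cancel,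
    inv_rpow hp.le, neg_div, rpow_neg hp.le, inv_inv]
  ring

theorem pkGamma_reflection (p k x : ℝ) (hp : 0 < p) (hk : 0 < k)
    (hx : 0 < x) (hxk : x < k) :
    pkGamma p k x * pkGamma p k (k - x) =
      p / k ^ 2 * (Real.pi / Real.sin (Real.pi * x / k)) := by
  have hcompl : (k - x) / k = 1 - x / k := by field_simp
  have hpow : p ^ (x / k) * p ^ (1 - x / k) = p := by
    rw [← rpow_add hp, add_sub_cancel, rpow_one]
  rw [pkGamma_eq_rpow_div_mul_Gamma hp hk hx,
    pkGamma_eq_rpow_div_mul_Gamma hp hk (sub_pos.2 hxk), hcompl]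
  calc p ^ (x / k) / k * Gamma (x / k) * (p ^ (1 - x / k) / k * Gamma (1 - x / k))
      = p ^ (x / k) * p ^ (1 - x / k) / k ^ 2 * (Gamma (x / k) * Gamma (1 - x / k)) := by ring
    _ = p / k ^ 2 * (π / sin (π * x / k)) := by
      rw [hpow, Gamma_mul_Gamma_one_sub, mul_div_assoc]
end

section
/- For x > 0 and p, k > 0, the p-k Nielsen beta function satisfies the functional equation ₚβₖ(x + k) = p/x − ₚβₖ(x). -/
open Real

noncomputable def pkBeta (p k x : ℝ) : ℝ :=
  (p / k) * ∫ t in (0:ℝ)..1, t ^ (x / k - 1) / (1 + t)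

/-! Raising the exponent `x / k - 1` by one turns the integrand `t ^ a / (1 + t)` into
`t ^ (a + 1) / (1 + t)`, and the two add up to `t ^ a`, whose integral over `[0, 1]` is
`1 / (a + 1) = k / x`. -/

lemma intervalIntegrable_rpow_div_one_add {a : ℝ} (ha : -1 < a) :
    IntervalIntegrable (fun t : ℝ => t ^ a / (1 + t)) MeasureTheory.volume 0 1 := by
  have hinv : ContinuousOn (fun t : ℝ => (1 + t)⁻¹) (Set.uIcc 0 1) := by
    refine (continuousOn_const.add continuousOn_id).inv₀ fun t ht => ?_
    rw [Set.uIcc_of_le zero_le_one] at ht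
    exact (by linarith [ht.1] : (0:ℝ) < 1 + t).ne'
  simpa only [div_eq_mul_inv] using
    (intervalIntegral.intervalIntegrable_rpow' ha).mul_continuousOn hinv

lemma integral_rpow_add_one_div_one_add_add {a : ℝ} (ha : -1 < a) :
    (∫ t in (0:ℝ)..1, t ^ (a + 1) / (1 + t)) + (∫ t in (0:ℝ)..1, t ^ a / (1 + t))
      = 1 / (a + 1) := by
  have ha' : a + 1 ≠ 0 := by linarith
  have hsum : ∀ t ∈ Set.uIcc (0:ℝ) 1, t ^ (a + 1) / (1 + t) + t ^ a / (1 + t) = t ^ a := by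
    intro t ht
    rw [Set.uIcc_of_le zero_le_one] at ht
    have h1t : 1 + t ≠ 0 := by linarith [ht.1]
    rw [rpow_add_one' ht.1 ha']
    field_simp
    ring
  rw [← intervalIntegral.integral_add (intervalIntegrable_rpow_div_one_add (by linarith))
    (intervalIntegrable_rpow_div_one_add ha), intervalIntegral.integral_congr hsum,
    integral_rpow (Or.inl ha), zero_rpow ha', one_rpow, sub_zero]

theorem pkBeta_functional_eq_general (p k x : ℝ) (hk : 0 < k) (hx : 0 < x) :
    pkBeta p k (x + k) = p / x - pkBeta p k x := by
  have hexp : (x + k) / k - 1 = (x / k - 1) + 1 := by field_simp; ring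
  have hsum := integral_rpow_add_one_div_one_add_add (a := x / k - 1)
    (by linarith [div_pos hx hk])
  unfold pkBeta
  rw [hexp, eq_sub_of_add_eq hsum, sub_add_cancel]
  field_simp

theorem pkBeta_functional_eq (p k x : ℝ) (hp : 0 < p) (hk : 0 < k) (hx : 0 < x) :
    pkBeta p k (x + k) = p / x - pkBeta p k x :=
  pkBeta_functional_eq_general p k x hk hx
end

section
/- For p, k > 0, the p-k Nielsen beta function ₚβₖ(x) = (p/k) ∫₀¹ t^{x/k−1}/(1+t) dt is logarithmically convex on (0, ∞): for x, y > 0 and r, s > 1 with 1/r + 1/s = 1, one has ₚβₖ(x/r + y/s) ≤ ₚβₖ(x)^{1/r} · ₚβₖ(y)^{1/s}. -/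
open Real

/-! Writing `f_x t = t ^ (x / k - 1) / (1 + t)`, the relation `1 / r + 1 / s = 1` makes
`f_(x / r + y / s) = f_x ^ (1 / r) * f_y ^ (1 / s)` pointwise on `(0, 1]`, so Hölder's inequality
bounds `∫ f_(x / r + y / s)` by `(∫ f_x) ^ (1 / r) * (∫ f_y) ^ (1 / s)`; the constant `p / k`
splits in the same way. -/

open MeasureTheory Set

theorem integral_rpow_mul_rpow_le {α : Type*} [MeasurableSpace α] {μ : Measure α} {f g : α → ℝ}
    (hf₀ : 0 ≤ᵐ[μ] f) (hg₀ : 0 ≤ᵐ[μ] g) (hf : Integrable f μ) (hg : Integrable g μ)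
    {a b : ℝ} (ha : 0 ≤ a) (hb : 0 ≤ b) (hab : a + b = 1) :
    ∫ x, f x ^ a * g x ^ b ∂μ ≤ (∫ x, f x ∂μ) ^ a * (∫ x, g x ∂μ) ^ b := by
  have hfg₀ : 0 ≤ᵐ[μ] fun x ↦ f x ^ a * g x ^ b := by
    filter_upwards [hf₀, hg₀] with x hfx hgx
    exact mul_nonneg (rpow_nonneg hfx a) (rpow_nonneg hgx b)
  have hfg : AEStronglyMeasurable (fun x ↦ f x ^ a * g x ^ b) μ :=
    ((hf.aemeasurable.pow_const a).mul (hg.aemeasurable.pow_const b)).aestronglyMeasurable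
  rw [integral_eq_lintegral_of_nonneg_ae hf₀ hf.1, integral_eq_lintegral_of_nonneg_ae hg₀ hg.1,
    integral_eq_lintegral_of_nonneg_ae hfg₀ hfg, ENNReal.toReal_rpow, ENNReal.toReal_rpow,
    ← ENNReal.toReal_mul]
  refine ENNReal.toReal_mono (ENNReal.mul_ne_top (ENNReal.rpow_ne_top_of_nonneg ha
    hf.lintegral_lt_top.ne) (ENNReal.rpow_ne_top_of_nonneg hb hg.lintegral_lt_top.ne)) ?_
  calc ∫⁻ x, ENNReal.ofReal (f x ^ a * g x ^ b) ∂μ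
      = ∫⁻ x, ENNReal.ofReal (f x) ^ a * ENNReal.ofReal (g x) ^ b ∂μ := by
        refine lintegral_congr_ae ?_
        filter_upwards [hf₀, hg₀] with x hfx hgx
        rw [ENNReal.ofReal_rpow_of_nonneg hfx ha, ENNReal.ofReal_rpow_of_nonneg hgx hb,
          ENNReal.ofReal_mul (rpow_nonneg hfx a)]
    _ ≤ _ := ENNReal.lintegral_mul_norm_pow_le hf.aemeasurable.ennreal_ofReal
        hg.aemeasurable.ennreal_ofReal ha hb hab

theorem rpow_div_rpow_mul_rpow_div_rpow {t w : ℝ} (ht : 0 < t) (hw : 0 ≤ w) {a b : ℝ}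
    (hab : a + b = 1) (c d : ℝ) :
    (t ^ c / w) ^ a * (t ^ d / w) ^ b = t ^ (a * c + b * d) / w := by
  rw [div_rpow (by positivity) hw, div_rpow (by positivity) hw, div_mul_div_comm,
    ← rpow_add' hw (by rw [hab]; exact one_ne_zero), hab, rpow_one, ← rpow_mul ht.le,
    ← rpow_mul ht.le, ← rpow_add ht, mul_comm c, mul_comm d]

theorem integrableOn_rpow_div_one_add {c b : ℝ} (hc : -1 < c) (hb : 0 ≤ b) :
    IntegrableOn (fun t : ℝ ↦ t ^ c / (1 + t)) (Ioc 0 b) := by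
  rw [← intervalIntegrable_iff_integrableOn_Ioc_of_le hb]
  simp_rw [div_eq_mul_inv]
  refine (intervalIntegral.intervalIntegrable_rpow' hc).mul_continuousOn
    (ContinuousOn.inv₀ (by fun_prop) fun t ht ↦ ?_)
  rw [uIcc_of_le hb] at ht
  linarith [ht.1]

theorem integral_rpow_sub_one_div_one_add_le {u v a b : ℝ} (hu : 0 < u) (hv : 0 < v)
    (ha : 0 ≤ a) (hb : 0 ≤ b) (hab : a + b = 1) :
    ∫ t in Ioc (0:ℝ) 1, t ^ (a * u + b * v - 1) / (1 + t)
      ≤ (∫ t in Ioc (0:ℝ) 1, t ^ (u - 1) / (1 + t)) ^ a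
        * (∫ t in Ioc (0:ℝ) 1, t ^ (v - 1) / (1 + t)) ^ b := by
  have hnonneg (w : ℝ) : 0 ≤ᵐ[volume.restrict (Ioc (0:ℝ) 1)] fun t : ℝ ↦ t ^ (w - 1) / (1 + t) :=
    ae_restrict_of_forall_mem measurableSet_Ioc fun t ht ↦ by
      have := ht.1; positivity
  have hexp : a * u + b * v - 1 = a * (u - 1) + b * (v - 1) := by linear_combination hab
  calc ∫ t in Ioc (0:ℝ) 1, t ^ (a * u + b * v - 1) / (1 + t)
      = ∫ t in Ioc (0:ℝ) 1, (t ^ (u - 1) / (1 + t)) ^ a * (t ^ (v - 1) / (1 + t)) ^ b := by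
        refine setIntegral_congr_fun measurableSet_Ioc fun t ht ↦ ?_
        rw [rpow_div_rpow_mul_rpow_div_rpow ht.1 (by linarith [ht.1]) hab, hexp]
    _ ≤ _ := integral_rpow_mul_rpow_le (hnonneg u) (hnonneg v)
        (integrableOn_rpow_div_one_add (by linarith) zero_le_one)
        (integrableOn_rpow_div_one_add (by linarith) zero_le_one) ha hb hab

theorem pkBeta_logConvex (p k : ℝ) (hp : 0 < p) (hk : 0 < k)
    (x y r s : ℝ) (hx : 0 < x) (hy : 0 < y) (hr : 1 < r) (hs : 1 < s)
    (hrs : 1 / r + 1 / s = 1) :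
    pkBeta p k (x / r + y / s) ≤ pkBeta p k x ^ (1 / r) * pkBeta p k y ^ (1 / s) := by
  set I : ℝ → ℝ := fun u ↦ ∫ t in Ioc (0:ℝ) 1, t ^ (u - 1) / (1 + t)
  have hpkBeta (u : ℝ) : pkBeta p k u = p / k * I (u / k) := by
    rw [pkBeta, intervalIntegral.integral_of_le zero_le_one]
  have hI (u : ℝ) : 0 ≤ I u :=
    setIntegral_nonneg measurableSet_Ioc fun t ht ↦ by have := ht.1; positivity
  have hpk : 0 < p / k := div_pos hp hk
  have holder : I ((x / r + y / s) / k) ≤ I (x / k) ^ (1 / r) * I (y / k) ^ (1 / s) := by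
    rw [show (x / r + y / s) / k = 1 / r * (x / k) + 1 / s * (y / k) by ring]
    exact integral_rpow_sub_one_div_one_add_le (div_pos hx hk) (div_pos hy hk)
      (by positivity) (by positivity) hrs
  rw [hpkBeta, hpkBeta, hpkBeta, mul_rpow hpk.le (hI _), mul_rpow hpk.le (hI _)]
  calc p / k * I ((x / r + y / s) / k)
      ≤ (p / k) ^ (1 / r + 1 / s) * (I (x / k) ^ (1 / r) * I (y / k) ^ (1 / s)) := by
        rw [hrs, rpow_one]; gcongr
    _ = _ := by rw [rpow_add hpk]; ring
end

section
/- For x > 0, p, k > 0 and n ∈ ℕ, the n-th derivative of the p-k Nielsen beta function satisfies ₚβₖ⁽ⁿ⁾(x + k) = (−1)ⁿ n! p / x^{n+1} − ₚβₖ⁽ⁿ⁾(x). -/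
/-!
With `s = x / k`, differentiating under the integral sign gives
`ₚβₖ⁽ⁿ⁾(x) = p / k ^ (n + 1) * ∫₀¹ (log t)ⁿ t^(s-1) / (1 + t) dt`; the domination comes from
`|log t|ⁿ t^(εn) ≤ ε⁻ⁿ` on `(0, 1]`. Replacing `x` by `x + k` replaces `s` by `s + 1`, and
`t^s / (1 + t) + t^(s-1) / (1 + t) = t^(s-1)`, so the two integrals add up to
`∫₀¹ (log t)ⁿ t^(s-1) dt`, the `n`-th derivative of `1 / s`, which is `(-1)ⁿ n! / s^(n+1)`.
-/

open Real

open MeasureTheory Set Filter intervalIntegral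
open scoped Interval

noncomputable def logPowIntegral (w : ℝ → ℝ) (n : ℕ) (s : ℝ) : ℝ :=
  ∫ t in (0:ℝ)..1, log t ^ n * t ^ (s - 1) * w t

lemma abs_log_pow_mul_rpow_le {t ε : ℝ} (ht₀ : 0 < t) (ht₁ : t ≤ 1) (hε : 0 < ε) (n : ℕ) :
    |log t| ^ n * t ^ (ε * n) ≤ (1 / ε) ^ n := by
  rw [rpow_mul_natCast ht₀.le, ← abs_of_pos (rpow_pos_of_pos ht₀ ε), ← mul_pow, ← abs_mul]
  exact pow_le_pow_left₀ (abs_nonneg _) (abs_log_mul_self_rpow_lt t ε ht₀ ht₁ hε).le n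

lemma intervalIntegrable_abs_log_pow_mul_rpow {c : ℝ} (hc : 0 < c) (n : ℕ) :
    IntervalIntegrable (fun t => |log t| ^ n * t ^ (c - 1)) volume 0 1 := by
  set ε := c / (2 * (n + 1))
  have hε : 0 < ε := by positivity
  have hexp : -1 < c - 1 - ε * n := by
    have : ε * n < c := by
      rw [div_mul_eq_mul_div, div_lt_iff₀ (by positivity)]; nlinarith
    linarith
  refine ((intervalIntegrable_rpow' hexp).const_mul ((1 / ε) ^ n)).mono_fun'
    (by fun_prop : Measurable _).aestronglyMeasurable ?_
  rw [uIoc_of_le zero_le_one]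
  filter_upwards [ae_restrict_mem measurableSet_Ioc] with t ⟨ht₀, ht₁⟩
  rw [Real.norm_of_nonneg (by positivity)]
  calc |log t| ^ n * t ^ (c - 1) = |log t| ^ n * t ^ (ε * n) * t ^ (c - 1 - ε * n) := by
        rw [mul_assoc, ← rpow_add ht₀]; ring_nf
    _ ≤ (1 / ε) ^ n * t ^ (c - 1 - ε * n) := by
        gcongr; exact abs_log_pow_mul_rpow_le ht₀ ht₁ hε n

section Weight

variable {w : ℝ → ℝ}

lemma norm_log_pow_mul_rpow_mul_le {C c x t : ℝ} (hC : ∀ t ∈ Icc (0:ℝ) 1, ‖w t‖ ≤ C)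
    (hcx : c ≤ x) (ht : t ∈ Ioc (0:ℝ) 1) (n : ℕ) :
    ‖log t ^ n * t ^ (x - 1) * w t‖ ≤ C * (|log t| ^ n * t ^ (c - 1)) := by
  obtain ⟨ht₀, ht₁⟩ := ht
  rw [norm_mul, norm_mul, norm_pow, Real.norm_eq_abs, Real.norm_of_nonneg (by positivity),
    mul_comm C]
  have hrpow : t ^ (x - 1) ≤ t ^ (c - 1) := rpow_le_rpow_of_exponent_ge ht₀ ht₁ (by linarith)
  gcongr
  exact hC t ⟨ht₀.le, ht₁⟩

lemma aestronglyMeasurable_log_pow_mul_rpow_mul (hw : ContinuousOn w (Icc 0 1)) (n : ℕ) (s : ℝ) :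
    AEStronglyMeasurable (fun t => log t ^ n * t ^ (s - 1) * w t) (volume.restrict (Ι 0 1)) := by
  rw [uIoc_of_le zero_le_one]
  exact (by fun_prop : Measurable fun t => log t ^ n * t ^ (s - 1)).aestronglyMeasurable.mul
    ((hw.aestronglyMeasurable measurableSet_Icc).mono_measure
      (Measure.restrict_mono Ioc_subset_Icc_self le_rfl))

lemma intervalIntegrable_log_pow_mul_rpow_mul (hw : ContinuousOn w (Icc 0 1)) (n : ℕ) {s : ℝ}
    (hs : 0 < s) :
    IntervalIntegrable (fun t => log t ^ n * t ^ (s - 1) * w t) volume 0 1 := by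
  obtain ⟨C, hC⟩ := isCompact_Icc.exists_bound_of_continuousOn hw
  refine ((intervalIntegrable_abs_log_pow_mul_rpow hs n).const_mul C).mono_fun'
    (aestronglyMeasurable_log_pow_mul_rpow_mul hw n s) ?_
  rw [uIoc_of_le zero_le_one]
  filter_upwards [ae_restrict_mem measurableSet_Ioc] with t ht
  exact norm_log_pow_mul_rpow_mul_le hC le_rfl ht n

lemma hasDerivAt_logPowIntegral (hw : ContinuousOn w (Icc 0 1)) (n : ℕ) {s : ℝ} (hs : 0 < s) :
    HasDerivAt (logPowIntegral w n) (logPowIntegral w (n + 1) s) s := by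
  obtain ⟨C, hC⟩ := isCompact_Icc.exists_bound_of_continuousOn hw
  refine (hasDerivAt_integral_of_dominated_loc_of_deriv_le
    (F' := fun x t => log t ^ (n + 1) * t ^ (x - 1) * w t) (Ioi_mem_nhds (half_lt_self hs))
    (Eventually.of_forall (aestronglyMeasurable_log_pow_mul_rpow_mul hw n))
    (intervalIntegrable_log_pow_mul_rpow_mul hw n hs)
    (aestronglyMeasurable_log_pow_mul_rpow_mul hw (n + 1) s) ?_
    ((intervalIntegrable_abs_log_pow_mul_rpow (half_pos hs) (n + 1)).const_mul C) ?_).2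
  · rw [uIoc_of_le zero_le_one]
    exact Eventually.of_forall fun t ht x hx => norm_log_pow_mul_rpow_mul_le hC hx.le ht _
  · rw [uIoc_of_le zero_le_one]
    refine Eventually.of_forall fun t ht x _ => ?_
    have hrpow := ((hasDerivAt_id' x).sub_const 1).const_rpow ht.1
    exact (hrpow.const_mul (log t ^ n) |>.mul_const (w t)).congr_deriv (by ring)

end Weight

lemma logPowIntegral_one (n : ℕ) {s : ℝ} (hs : 0 < s) :
    logPowIntegral (fun _ => 1) n s = (-1) ^ n * n.factorial / s ^ (n + 1) := by
  induction n generalizing s with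
  | zero =>
    simp only [logPowIntegral, pow_zero, one_mul, mul_one]
    rw [integral_rpow (Or.inl (by linarith)), one_rpow, zero_rpow (by linarith)]
    simp
  | succ n ih =>
    have hpow : HasDerivAt (fun u : ℝ => u ^ (n + 1)) ((n + 1 : ℕ) * s ^ n) s := hasDerivAt_pow _ s
    have hrhs := (hpow.inv (pow_ne_zero _ hs.ne')).const_mul ((-1 : ℝ) ^ n * n.factorial)
    have hlhs := (hasDerivAt_logPowIntegral continuousOn_const n hs).congr_of_eventuallyEq
      (eventually_gt_nhds hs |>.mono fun u hu => (ih hu).symm)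
    rw [hlhs.unique hrhs, Nat.factorial_succ]
    push_cast
    field_simp
    ring

lemma continuousOn_inv_one_add : ContinuousOn (fun t : ℝ => (1 + t)⁻¹) (Icc 0 1) :=
  (continuous_const.add continuous_id).continuousOn.inv₀ fun t ht => by
    have := ht.1; dsimp; positivity

lemma logPowIntegral_inv_one_add_add (n : ℕ) {s : ℝ} (hs : 0 < s) :
    logPowIntegral (fun t => (1 + t)⁻¹) n (s + 1) + logPowIntegral (fun t => (1 + t)⁻¹) n s =
      logPowIntegral (fun _ => 1) n s := by
  rw [logPowIntegral, logPowIntegral, logPowIntegral, ← integral_add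
    (intervalIntegrable_log_pow_mul_rpow_mul continuousOn_inv_one_add n (by linarith))
    (intervalIntegrable_log_pow_mul_rpow_mul continuousOn_inv_one_add n hs)]
  refine integral_congr fun t ht => ?_
  have ht₀ : 0 ≤ t := by simpa using ht.1
  have : t ^ (s + 1 - 1) = t ^ (s - 1) * t := by
    rw [add_sub_cancel_right, ← rpow_add_one' ht₀ (by linarith), sub_add_cancel]
  simp only [this]
  field_simp
  ring

lemma pkBeta_eq_logPowIntegral (p k x : ℝ) :
    pkBeta p k x = p / k * logPowIntegral (fun t => (1 + t)⁻¹) 0 (x / k) := by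
  simp only [pkBeta, logPowIntegral, pow_zero, one_mul, div_eq_mul_inv]

lemma iteratedDeriv_pkBeta (p : ℝ) {k : ℝ} (hk : 0 < k) (n : ℕ) {x : ℝ} (hx : 0 < x) :
    iteratedDeriv n (pkBeta p k) x =
      p / k ^ (n + 1) * logPowIntegral (fun t => (1 + t)⁻¹) n (x / k) := by
  induction n generalizing x with
  | zero => rw [iteratedDeriv_zero, pkBeta_eq_logPowIntegral, zero_add, pow_one]
  | succ n ih =>
    have hev : iteratedDeriv n (pkBeta p k) =ᶠ[nhds x]
        fun y => p / k ^ (n + 1) * logPowIntegral (fun t => (1 + t)⁻¹) n (y / k) :=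
      (eventually_gt_nhds hx).mono fun y hy => ih hy
    have hD := (hasDerivAt_logPowIntegral continuousOn_inv_one_add n (div_pos hx hk)).comp x
      ((hasDerivAt_id' x).div_const k) |>.const_mul (p / k ^ (n + 1))
    rw [iteratedDeriv_succ, hev.deriv_eq]
    refine hD.deriv.trans ?_
    field_simp
    ring

theorem pkBeta_deriv_functional_eq_general (p k x : ℝ) (hk : 0 < k)
    (hx : 0 < x) (n : ℕ) :
    iteratedDeriv n (pkBeta p k) (x + k) =
      (-1 : ℝ) ^ n * (n.factorial : ℝ) * p / x ^ (n + 1) -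
        iteratedDeriv n (pkBeta p k) x := by
  have hxk : 0 < x / k := div_pos hx hk
  have hshift : (x + k) / k = x / k + 1 := by rw [add_div, div_self hk.ne']
  have hsplit := logPowIntegral_inv_one_add_add n hxk
  rw [logPowIntegral_one n hxk] at hsplit
  rw [iteratedDeriv_pkBeta p hk n (by positivity), iteratedDeriv_pkBeta p hk n hx, hshift,
    eq_sub_of_add_eq hsplit, div_pow]
  field_simp

theorem pkBeta_deriv_functional_eq (p k x : ℝ) (hp : 0 < p) (hk : 0 < k)
    (hx : 0 < x) (n : ℕ) :
    iteratedDeriv n (pkBeta p k) (x + k) =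
      (-1 : ℝ) ^ n * (n.factorial : ℝ) * p / x ^ (n + 1) -
        iteratedDeriv n (pkBeta p k) x :=
  pkBeta_deriv_functional_eq_general p k x hk hx n
end

section
/- For x, y ≥ 0 and p, k > 0, the inequality ₚβₖ(x + k) · ₚβₖ(y + k) ≤ (p ln 2 / k) · ₚβₖ(x + y + k) holds. -/
/-!
Writing `a = x / k` and `b = y / k`, we have `ₚβₖ(x + k) = (p / k) ∫₀¹ tᵃ / (1 + t) dt`, so the
claim is Chebyshev's integral inequality for the similarly ordered functions `tᵃ` and `tᵇ` against
the weight `1 / (1 + t)` on `(0, 1]`, whose total mass is `ln 2`.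
-/

open Real

open MeasureTheory Set

section Chebyshev

variable {α : Type*} [MeasurableSpace α] {μ : Measure α} [SFinite μ] {s : Set α}
  {f g w : α → ℝ}

theorem MonovaryOn.integral_mul_integral_le_integral_mul_integral
    (hfg : MonovaryOn f g s) (hs : ∀ᵐ x ∂μ, x ∈ s) (hw : 0 ≤ᵐ[μ] w) (hw_int : Integrable w μ)
    (hfw : Integrable (fun x ↦ f x * w x) μ) (hgw : Integrable (fun x ↦ g x * w x) μ)
    (hfgw : Integrable (fun x ↦ f x * g x * w x) μ) :
    (∫ x, f x * w x ∂μ) * (∫ x, g x * w x ∂μ) ≤ (∫ x, w x ∂μ) * ∫ x, f x * g x * w x ∂μ := by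
  have hae : ∀ᵐ z ∂μ.prod μ, (z.1 ∈ s ∧ 0 ≤ w z.1) ∧ (z.2 ∈ s ∧ 0 ≤ w z.2) :=
    (Measure.quasiMeasurePreserving_fst.ae (hs.and hw)).and
      (Measure.quasiMeasurePreserving_snd.ae (hs.and hw))
  -- Twice the difference of the two sides is the integral of this nonnegative function.
  have hpos : 0 ≤ ∫ z, (f z.1 - f z.2) * (g z.1 - g z.2) * (w z.1 * w z.2) ∂μ.prod μ := by
    refine integral_nonneg_of_ae (hae.mono fun z ⟨⟨hs₁, hw₁⟩, hs₂, hw₂⟩ ↦ ?_)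
    exact mul_nonneg (hfg.sub_mul_sub_nonneg hs₂ hs₁) (mul_nonneg hw₁ hw₂)
  have hexpand : (fun z : α × α ↦ (f z.1 - f z.2) * (g z.1 - g z.2) * (w z.1 * w z.2)) =
      fun z ↦ f z.1 * g z.1 * w z.1 * w z.2 + w z.1 * (f z.2 * g z.2 * w z.2)
        - f z.1 * w z.1 * (g z.2 * w z.2) - g z.1 * w z.1 * (f z.2 * w z.2) := by
    ext z; ring
  have i₁ := hfgw.mul_prod hw_int
  have i₂ := hw_int.mul_prod hfgw
  have i₃ := hfw.mul_prod hgw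
  have i₄ := hgw.mul_prod hfw
  rw [hexpand, integral_sub, integral_sub, integral_add,
    integral_prod_mul (fun x ↦ f x * g x * w x) w, integral_prod_mul w (fun x ↦ f x * g x * w x),
    integral_prod_mul (fun x ↦ f x * w x) (fun x ↦ g x * w x),
    integral_prod_mul (fun x ↦ g x * w x) (fun x ↦ f x * w x)] at hpos
  · linarith
  exacts [i₁, i₂, i₁.add i₂, i₃, (i₁.add i₂).sub i₃, i₄]

end Chebyshev

lemma intervalIntegrable_rpow_mul_inv_one_add {c : ℝ} (hc : -1 < c) :
    IntervalIntegrable (fun t : ℝ ↦ t ^ c * (1 + t)⁻¹) volume 0 1 := by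
  refine (intervalIntegral.intervalIntegrable_rpow' hc).mul_continuousOn <|
    ContinuousOn.inv₀ (by fun_prop) fun t ht ↦ ?_
  rw [uIcc_of_le zero_le_one] at ht
  linarith [ht.1]

lemma integral_inv_one_add : ∫ t in (0:ℝ)..1, (1 + t)⁻¹ = log 2 := by
  norm_num

theorem integral_rpow_div_one_add_mul_le {a b : ℝ} (ha : 0 ≤ a) (hb : 0 ≤ b) :
    (∫ t in (0:ℝ)..1, t ^ a / (1 + t)) * ∫ t in (0:ℝ)..1, t ^ b / (1 + t) ≤
      log 2 * ∫ t in (0:ℝ)..1, t ^ (a + b) / (1 + t) := by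
  have hI {c : ℝ} (hc : 0 ≤ c) :
      Integrable (fun t : ℝ ↦ t ^ c * (1 + t)⁻¹) (volume.restrict (Ioc 0 1)) :=
    (intervalIntegrable_rpow_mul_inv_one_add (by linarith)).1
  have hmul : EqOn (fun t : ℝ ↦ t ^ a * t ^ b * (1 + t)⁻¹) (fun t ↦ t ^ (a + b) * (1 + t)⁻¹)
      (Ioc 0 1) := fun t ht ↦ by simp only [rpow_add ht.1]
  have hmono {c : ℝ} (hc : 0 ≤ c) := monotoneOn_rpow_Ici_of_exponent_nonneg hc
  have key := ((hmono ha).monovaryOn (hmono hb)).integral_mul_integral_le_integral_mul_integral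
    (μ := volume.restrict (Ioc 0 1)) (w := fun t ↦ (1 + t)⁻¹)
    (ae_restrict_of_forall_mem measurableSet_Ioc fun t ht ↦ le_of_lt ht.1)
    (ae_restrict_of_forall_mem measurableSet_Ioc fun t ht ↦ (inv_pos.2 (by linarith [ht.1])).le)
    (by simpa using hI le_rfl) (hI ha) (hI hb)
    ((hI (add_nonneg ha hb)).congr (ae_restrict_of_forall_mem measurableSet_Ioc hmul.symm))
  rw [setIntegral_congr_fun measurableSet_Ioc hmul] at key
  simpa only [intervalIntegral.integral_of_le zero_le_one, div_eq_mul_inv,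
    ← integral_inv_one_add] using key

lemma pkBeta_add_self (p : ℝ) {k : ℝ} (hk : k ≠ 0) (x : ℝ) :
    pkBeta p k (x + k) = p / k * ∫ t in (0:ℝ)..1, t ^ (x / k) / (1 + t) := by
  rw [pkBeta, add_div, div_self hk, add_sub_cancel_right]

theorem pkBeta_product_ineq_general (p k x y : ℝ) (hk : 0 < k)
    (hx : 0 ≤ x) (hy : 0 ≤ y) :
    pkBeta p k (x + k) * pkBeta p k (y + k) ≤
      p * Real.log 2 / k * pkBeta p k (x + y + k) := by
  have key := integral_rpow_div_one_add_mul_le (div_nonneg hx hk.le) (div_nonneg hy hk.le)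
  rw [pkBeta_add_self p hk.ne', pkBeta_add_self p hk.ne', pkBeta_add_self p hk.ne', add_div]
  linear_combination (p / k) ^ 2 * key

theorem pkBeta_product_ineq (p k x y : ℝ) (hp : 0 < p) (hk : 0 < k)
    (hx : 0 ≤ x) (hy : 0 ≤ y) :
    pkBeta p k (x + k) * pkBeta p k (y + k) ≤
      p * Real.log 2 / k * pkBeta p k (x + y + k) :=
  pkBeta_product_ineq_general p k x y hk hx hy
end

section
/- For x, y, z > 0 and p, k > 0, one has ₚβₖ(x) · ₚβₖ(x + y + z) − ₚβₖ(x + y) · ₚβₖ(x + z) > 0. -/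
/-!
With Nielsen's `β(a) = ∫₀¹ t^(a-1)/(1+t) dt` one has `ₚβₖ(x) = (p/k) β(x/k)`, so the claim is
`β(a+b) β(a+c) < β(a) β(a+b+c)` for `a, b, c > 0`. This is Chebyshev's integral inequality for
the weight `w(t) = t^(a-1)/(1+t)` and the increasing functions `t^b`, `t^c` on `(0, 1]`: twice the
gap is the integral over the square of `w(t) w(s) (t^b - s^b) (t^c - s^c)`, which is positive off
the diagonal, and the diagonal is null.
-/

open Real

open MeasureTheory Set

namespace MeasureTheory

section Chebyshev

variable {α : Type*}

def chebyshevKernel (w g h : α → ℝ) (z : α × α) : ℝ :=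
  w z.1 * w z.2 * ((g z.1 - g z.2) * (h z.1 - h z.2))

theorem chebyshevKernel_eq (w g h : α → ℝ) : chebyshevKernel w g h =
    fun z => (w z.1 * (w z.2 * g z.2 * h z.2) + w z.1 * g z.1 * h z.1 * w z.2) -
      (w z.1 * g z.1 * (w z.2 * h z.2) + w z.1 * h z.1 * (w z.2 * g z.2)) := by
  ext z; simp only [chebyshevKernel]; ring

theorem chebyshevKernel_pos [LinearOrder α] {w g h : α → ℝ} {S : Set α}
    (hw_pos : ∀ x ∈ S, 0 < w x) (hg : StrictMonoOn g S) (hh : StrictMonoOn h S)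
    {z : α × α} (hz : z ∈ S ×ˢ S) (hz_ne : z.1 ≠ z.2) : 0 < chebyshevKernel w g h z := by
  refine mul_pos (mul_pos (hw_pos _ hz.1) (hw_pos _ hz.2)) ?_
  rcases lt_or_gt_of_ne hz_ne with hlt | hlt
  · exact mul_pos_of_neg_of_neg (sub_neg.2 (hg hz.1 hz.2 hlt)) (sub_neg.2 (hh hz.1 hz.2 hlt))
  · exact mul_pos (sub_pos.2 (hg hz.2 hz.1 hlt)) (sub_pos.2 (hh hz.2 hz.1 hlt))

variable [MeasurableSpace α] {μ : Measure α} {w g h : α → ℝ}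

theorem integrable_chebyshevKernel (hw : Integrable w μ) (hwg : Integrable (fun x => w x * g x) μ)
    (hwh : Integrable (fun x => w x * h x) μ) (hwgh : Integrable (fun x => w x * g x * h x) μ) :
    Integrable (chebyshevKernel w g h) (μ.prod μ) := by
  rw [chebyshevKernel_eq]
  exact ((hw.mul_prod hwgh).add (hwgh.mul_prod hw)).sub ((hwg.mul_prod hwh).add (hwh.mul_prod hwg))

theorem integral_chebyshevKernel [SFinite μ] (hw : Integrable w μ)
    (hwg : Integrable (fun x => w x * g x) μ) (hwh : Integrable (fun x => w x * h x) μ)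
    (hwgh : Integrable (fun x => w x * g x * h x) μ) :
    ∫ z, chebyshevKernel w g h z ∂μ.prod μ =
      2 * ((∫ x, w x ∂μ) * (∫ x, w x * g x * h x ∂μ) -
        (∫ x, w x * g x ∂μ) * (∫ x, w x * h x ∂μ)) := by
  have hplus : Integrable (fun z : α × α =>
      w z.1 * (w z.2 * g z.2 * h z.2) + w z.1 * g z.1 * h z.1 * w z.2) (μ.prod μ) :=
    (hw.mul_prod hwgh).add (hwgh.mul_prod hw)
  have hminus : Integrable (fun z : α × α =>
      w z.1 * g z.1 * (w z.2 * h z.2) + w z.1 * h z.1 * (w z.2 * g z.2)) (μ.prod μ) :=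
    (hwg.mul_prod hwh).add (hwh.mul_prod hwg)
  rw [chebyshevKernel_eq, integral_sub hplus hminus,
    integral_add (hw.mul_prod hwgh) (hwgh.mul_prod hw),
    integral_add (hwg.mul_prod hwh) (hwh.mul_prod hwg),
    integral_prod_mul w (fun x => w x * g x * h x), integral_prod_mul (fun x => w x * g x * h x) w,
    integral_prod_mul (fun x => w x * g x) (fun x => w x * h x),
    integral_prod_mul (fun x => w x * h x) (fun x => w x * g x)]
  ring

theorem Measure.prod_self_diagonal_eq_zero [MeasurableEq α] [SFinite μ] [NullSingletonClass μ] :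
    (μ.prod μ) (diagonal α) = 0 := by
  have hslice : ∀ x : α, Prod.mk x ⁻¹' diagonal α = {x} := fun x => by ext; simp [eq_comm]
  simp [Measure.prod_apply measurableSet_diagonal, hslice]

theorem integral_mul_integral_lt_of_strictMonoOn [LinearOrder α] [MeasurableEq α] [SFinite μ]
    [NullSingletonClass μ] {S : Set α} (hμ : μ ≠ 0) (hS : ∀ᵐ x ∂μ, x ∈ S)
    (hw_pos : ∀ x ∈ S, 0 < w x) (hg : StrictMonoOn g S) (hh : StrictMonoOn h S)
    (hw : Integrable w μ) (hwg : Integrable (fun x => w x * g x) μ)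
    (hwh : Integrable (fun x => w x * h x) μ) (hwgh : Integrable (fun x => w x * g x * h x) μ) :
    (∫ x, w x * g x ∂μ) * (∫ x, w x * h x ∂μ) < (∫ x, w x ∂μ) * (∫ x, w x * g x * h x ∂μ) := by
  have hSS : ∀ᵐ z ∂μ.prod μ, z ∈ S ×ˢ S :=
    (Measure.quasiMeasurePreserving_fst.ae hS).and (Measure.quasiMeasurePreserving_snd.ae hS)
  have hnonneg : 0 ≤ᵐ[μ.prod μ] chebyshevKernel w g h := by
    filter_upwards [hSS] with z hz
    rcases eq_or_ne z.1 z.2 with hzz | hzz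
    · simp [chebyshevKernel, hzz]
    · exact (chebyshevKernel_pos hw_pos hg hh hz hzz).le
  have hS_ne : μ S ≠ 0 := by
    rwa [measure_congr (ae_eq_univ.2 hS : S =ᵐ[μ] univ), Ne, Measure.measure_univ_eq_zero]
  have hsupport : 0 < (μ.prod μ) (Function.support (chebyshevKernel w g h)) :=
    calc 0 < (μ.prod μ) (S ×ˢ S \ diagonal α) := by
          rw [measure_sdiff_null Measure.prod_self_diagonal_eq_zero, Measure.prod_prod]
          exact ENNReal.mul_pos hS_ne hS_ne
      _ ≤ _ := measure_mono fun z hz => (chebyshevKernel_pos hw_pos hg hh hz.1 hz.2).ne'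
  have := (integral_pos_iff_support_of_nonneg_ae hnonneg
    (integrable_chebyshevKernel hw hwg hwh hwgh)).2 hsupport
  linarith [integral_chebyshevKernel hw hwg hwh hwgh]

end Chebyshev

end MeasureTheory

noncomputable def nielsenBeta (a : ℝ) : ℝ :=
  ∫ t in (0:ℝ)..1, t ^ (a - 1) / (1 + t)

theorem pkBeta_eq (p k x : ℝ) : pkBeta p k x = p / k * nielsenBeta (x / k) := rfl

theorem intervalIntegrable_rpow_sub_one_div_one_add {a : ℝ} (ha : 0 < a) :
    IntervalIntegrable (fun t : ℝ => t ^ (a - 1) / (1 + t)) volume 0 1 := by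
  have hinv : ContinuousOn (fun t : ℝ => (1 + t)⁻¹) (uIcc 0 1) :=
    ContinuousOn.inv₀ (by fun_prop) fun t ht => by
      rw [uIcc_of_le zero_le_one] at ht
      linarith [ht.1]
  simpa only [div_eq_mul_inv] using
    (intervalIntegral.intervalIntegrable_rpow' (by linarith : -1 < a - 1)).mul_continuousOn hinv

theorem rpow_sub_one_div_one_add_mul_rpow {t : ℝ} (ht : 0 < t) (a b : ℝ) :
    t ^ (a - 1) / (1 + t) * t ^ b = t ^ (a + b - 1) / (1 + t) := by
  rw [div_mul_eq_mul_div, ← rpow_add ht]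
  ring_nf

theorem nielsenBeta_mul_lt {a b c : ℝ} (ha : 0 < a) (hb : 0 < b) (hc : 0 < c) :
    nielsenBeta (a + b) * nielsenBeta (a + c) < nielsenBeta a * nielsenBeta (a + b + c) := by
  set μ := volume.restrict (Ioc (0:ℝ) 1)
  set w : ℝ → ℝ := fun t => t ^ (a - 1) / (1 + t)
  have hintegral : ∀ e : ℝ, nielsenBeta e = ∫ t, t ^ (e - 1) / (1 + t) ∂μ := fun e =>
    intervalIntegral.integral_of_le zero_le_one
  have hintegrable : ∀ e : ℝ, 0 < e → Integrable (fun t : ℝ => t ^ (e - 1) / (1 + t)) μ :=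
    fun e he => (intervalIntegrable_rpow_sub_one_div_one_add he).1
  have hshift : ∀ e : ℝ, (fun t => w t * t ^ e) =ᵐ[μ] fun t => t ^ (a + e - 1) / (1 + t) := by
    intro e
    filter_upwards [ae_restrict_mem measurableSet_Ioc] with t ht
    exact rpow_sub_one_div_one_add_mul_rpow ht.1 a e
  have hshift₂ : (fun t => w t * t ^ b * t ^ c) =ᵐ[μ] fun t => t ^ (a + b + c - 1) / (1 + t) := by
    filter_upwards [ae_restrict_mem measurableSet_Ioc] with t ht
    rw [rpow_sub_one_div_one_add_mul_rpow ht.1, rpow_sub_one_div_one_add_mul_rpow ht.1]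
  have hμ : μ ≠ 0 := by simp [μ]
  have hmono : ∀ e : ℝ, 0 < e → StrictMonoOn (fun t : ℝ => t ^ e) (Ioc 0 1) := fun e he =>
    (strictMonoOn_rpow_Ici_of_exponent_pos he).mono fun t ht => ht.1.le
  have hw_pos : ∀ t ∈ Ioc (0:ℝ) 1, 0 < w t := fun t ht =>
    div_pos (rpow_pos_of_pos ht.1 _) (by linarith [ht.1])
  have := integral_mul_integral_lt_of_strictMonoOn hμ (ae_restrict_mem measurableSet_Ioc) hw_pos
    (hmono b hb) (hmono c hc) (hintegrable a ha)
    ((hintegrable _ (by positivity)).congr (hshift b).symm)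
    ((hintegrable _ (by positivity)).congr (hshift c).symm)
    ((hintegrable _ (by positivity)).congr hshift₂.symm)
  rwa [integral_congr_ae (hshift b), integral_congr_ae (hshift c), integral_congr_ae hshift₂,
    ← hintegral, ← hintegral, ← hintegral, ← hintegral] at this

theorem pkBeta_totally_positive (p k x y z : ℝ) (hp : 0 < p) (hk : 0 < k)
    (hx : 0 < x) (hy : 0 < y) (hz : 0 < z) :
    0 < pkBeta p k x * pkBeta p k (x + y + z) -
      pkBeta p k (x + y) * pkBeta p k (x + z) := by
  have hlt := nielsenBeta_mul_lt (div_pos hx hk) (div_pos hy hk) (div_pos hz hk)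
  have hfactor : pkBeta p k x * pkBeta p k (x + y + z) - pkBeta p k (x + y) * pkBeta p k (x + z) =
      (p / k) ^ 2 * (nielsenBeta (x / k) * nielsenBeta (x / k + y / k + z / k) -
        nielsenBeta (x / k + y / k) * nielsenBeta (x / k + z / k)) := by
    simp only [pkBeta_eq, add_div]
    ring
  rw [hfactor]
  exact mul_pos (pow_pos (div_pos hp hk) 2) (sub_pos.2 hlt)
end
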